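/- arXiv:2504.03920 — 7 statements merged into one kernel-verified Lean document; each statement's English description precedes it below -/
import Mathlib

section
/- Let 𝒱 ⊆ ℝⁿ be open, let f : 𝒱 → ℝⁿ be twice differentiable at u ∈ 𝒱, and let λ : 𝒱 → ℝ and r : 𝒱 → ℝⁿ be differentiable at u and satisfy Df(w) r(w) = λ(w) r(w) for all w in a neighborhood of u. Let l ∈ ℝⁿ satisfy (Df(u))ᵀ l = λ(u) l. Then for every v ∈ ℝⁿ, ⟨l, D²f(u)[r(u), v]⟩ = ⟨l, r(u)⟩ · (Dλ(u) v). -/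
open Topology
open scoped RealInnerProductSpace

section EigenvalueDerivative

variable {𝕜 E F : Type*} [NontriviallyNormedField 𝕜]
  [NormedAddCommGroup E] [NormedSpace 𝕜 E] [NormedAddCommGroup F] [NormedSpace 𝕜 F]
  {A : E → F →L[𝕜] F} {lam : E → 𝕜} {r : E → F} {u : E}

theorem fderiv_apply_add_apply_fderiv_eq_of_eventually_eigen
    (hA : DifferentiableAt 𝕜 A u) (hlam : DifferentiableAt 𝕜 lam u)
    (hr : DifferentiableAt 𝕜 r u) (heig : ∀ᶠ w in 𝓝 u, A w (r w) = lam w • r w) (v : E) :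
    fderiv 𝕜 A u v (r u) + A u (fderiv 𝕜 r u v)
      = lam u • fderiv 𝕜 r u v + fderiv 𝕜 lam u v • r u := by
  have hderiv : fderiv 𝕜 (fun w => A w (r w)) u v = fderiv 𝕜 (fun w => lam w • r w) u v := by
    rw [Filter.EventuallyEq.fderiv_eq heig]
  simp only [fderiv_clm_apply hA hr, fderiv_fun_smul hlam hr] at hderiv
  simpa [add_comm] using hderiv

/-- Pairing the differentiated eigenvalue equation with a left eigenvector `φ` cancels the
terms containing the derivative of the eigenvector. -/
theorem apply_fderiv_apply_eq_mul_fderiv_of_eventually_eigen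
    (hA : DifferentiableAt 𝕜 A u) (hlam : DifferentiableAt 𝕜 lam u)
    (hr : DifferentiableAt 𝕜 r u) (heig : ∀ᶠ w in 𝓝 u, A w (r w) = lam w • r w)
    (φ : F →L[𝕜] 𝕜) (hφ : ∀ x, φ (A u x) = lam u * φ x) (v : E) :
    φ (fderiv 𝕜 A u v (r u)) = φ (r u) * fderiv 𝕜 lam u v := by
  have h := congrArg φ (fderiv_apply_add_apply_fderiv_eq_of_eventually_eigen hA hlam hr heig v)
  simp only [map_add, map_smul, smul_eq_mul, hφ] at h
  linear_combination h

end EigenvalueDerivative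

theorem stmt1_general {n : ℕ}
    (f : EuclideanSpace ℝ (Fin n) → EuclideanSpace ℝ (Fin n))
    (u : EuclideanSpace ℝ (Fin n))
    -- `f` is twice differentiable at `u`:
    (hf2 : DifferentiableAt ℝ (fderiv ℝ f) u)
    (lam : EuclideanSpace ℝ (Fin n) → ℝ)
    (r : EuclideanSpace ℝ (Fin n) → EuclideanSpace ℝ (Fin n))
    (hlam : DifferentiableAt ℝ lam u) (hr : DifferentiableAt ℝ r u)
    -- eigenvalue equation `Df(w) r(w) = λ(w) r(w)` near `u`:
    (heig : ∀ᶠ w in 𝓝 u, fderiv ℝ f w (r w) = lam w • r w)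
    -- `l` is a left eigenvector: `(Df(u))ᵀ l = λ(u) l`:
    (l : EuclideanSpace ℝ (Fin n))
    (hl : ∀ x, ⟪l, fderiv ℝ f u x⟫ = lam u * ⟪l, x⟫) :
    ∀ v, ⟪l, fderiv ℝ (fderiv ℝ f) u v (r u)⟫ = ⟪l, r u⟫ * fderiv ℝ lam u v :=
  apply_fderiv_apply_eq_mul_fderiv_of_eventually_eigen hf2 hlam hr heig (innerSL ℝ l) hl

theorem stmt1 {n : ℕ} (V : Set (EuclideanSpace ℝ (Fin n))) (hV : IsOpen V)
    (f : EuclideanSpace ℝ (Fin n) → EuclideanSpace ℝ (Fin n))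
    (u : EuclideanSpace ℝ (Fin n)) (hu : u ∈ V)
    -- `f` is twice differentiable at `u`:
    (hf1 : ∀ᶠ w in 𝓝 u, DifferentiableAt ℝ f w)
    (hf2 : DifferentiableAt ℝ (fderiv ℝ f) u)
    (lam : EuclideanSpace ℝ (Fin n) → ℝ)
    (r : EuclideanSpace ℝ (Fin n) → EuclideanSpace ℝ (Fin n))
    (hlam : DifferentiableAt ℝ lam u) (hr : DifferentiableAt ℝ r u)
    -- eigenvalue equation `Df(w) r(w) = λ(w) r(w)` near `u`:
    (heig : ∀ᶠ w in 𝓝 u, fderiv ℝ f w (r w) = lam w • r w)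
    -- `l` is a left eigenvector: `(Df(u))ᵀ l = λ(u) l`:
    (l : EuclideanSpace ℝ (Fin n))
    (hl : ∀ x, ⟪l, fderiv ℝ f u x⟫ = lam u * ⟪l, x⟫) :
    ∀ v, ⟪l, fderiv ℝ (fderiv ℝ f) u v (r u)⟫ = ⟪l, r u⟫ * fderiv ℝ lam u v :=
  stmt1_general f u hf2 lam r hlam hr heig l hl
end

section
/- Let 𝒱 ⊆ ℝⁿ be open, f : 𝒱 → ℝⁿ, η : 𝒱 → ℝ, q : 𝒱 → ℝ all C¹, and assume the entropy–entropy flux compatibility Dq(w) = Dη(w) ∘ Df(w) for all w ∈ 𝒱. Let s > 0, let S : [0, s] → 𝒱 and σ : [0, s] → ℝ be C¹ with S(0) = u, and suppose the Rankine–Hugoniot relation f(S(t)) − f(u) = σ(t)·(S(t) − u) holds for all t ∈ [0, s]. Then for every v ∈ 𝒱: q(S(s);v) − σ(s)·η(S(s)|v) = q(u;v) − σ(s)·η(u|v) + ∫₀ˢ σ′(t)·η(u|S(t)) dt. -/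
/-! Along the shock curve put `g(t) = q(S t; v) − σ(t) η(S t | v) + σ(t) η(u | v)`. Differentiating the
Rankine–Hugoniot relation gives `Df(S) S' = σ' (S − u) + σ S'`, and with the compatibility
`Dq = Dη ∘ Df` the terms carrying `σ S'` cancel in `g'`. What remains is
`σ' (η(u|v) − η(S|v) + (Dη(S) − Dη(v))(S − u))`, which is `σ' η(u | S)` by the three-point identity
for relative entropy. The theorem is `g(s) − g(0) = ∫₀ˢ g'`. -/

open Set

/-- Relative entropy: `η(u|v) = η(u) − η(v) − ⟨∇η(v), u − v⟩`. -/
noncomputable def relEnt {n : ℕ} (η : EuclideanSpace ℝ (Fin n) → ℝ)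
    (u v : EuclideanSpace ℝ (Fin n)) : ℝ :=
  η u - η v - fderiv ℝ η v (u - v)

/-- Relative entropy flux: `q(u;v) = q(u) − q(v) − ⟨∇η(v), f(u) − f(v)⟩`. -/
noncomputable def relFlux {n : ℕ} (η q : EuclideanSpace ℝ (Fin n) → ℝ)
    (f : EuclideanSpace ℝ (Fin n) → EuclideanSpace ℝ (Fin n))
    (u v : EuclideanSpace ℝ (Fin n)) : ℝ :=
  q u - q v - fderiv ℝ η v (f u - f v)

theorem HasFDerivAt.apply_eq_of_rankineHugoniot {E : Type*} [NormedAddCommGroup E]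
    [NormedSpace ℝ E] {f : E → E} {f' : E →L[ℝ] E} {S : ℝ → E} {S' : E} {σ : ℝ → ℝ} {σ' : ℝ}
    {s : Set ℝ} {t : ℝ} {u : E} (hf : HasFDerivAt f f' (S t)) (hS : HasDerivWithinAt S S' s t)
    (hσ : HasDerivWithinAt σ σ' s t) (ht : t ∈ s) (hs : UniqueDiffWithinAt ℝ s t)
    (hRH : ∀ τ ∈ s, f (S τ) - f u = σ τ • (S τ - u)) :
    f' S' = σ' • (S t - u) + σ t • S' := by
  have hRH' : HasDerivWithinAt (fun τ => f (S τ)) (σ' • (S t - u) + σ t • S') s t := by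
    rw [add_comm]
    exact ((hσ.smul (hS.sub_const u)).const_add (f u)).congr_of_mem
      (fun τ hτ => eq_add_of_sub_eq' (hRH τ hτ)) ht
  exact hs.eq_deriv s (hf.comp_hasDerivWithinAt t hS) hRH'

section RelativeEntropy

variable {n : ℕ} {η q : EuclideanSpace ℝ (Fin n) → ℝ}
  {f : EuclideanSpace ℝ (Fin n) → EuclideanSpace ℝ (Fin n)}

theorem relEnt_add_relEnt (η : EuclideanSpace ℝ (Fin n) → ℝ) (u w v : EuclideanSpace ℝ (Fin n)) :
    relEnt η u w + relEnt η w v = relEnt η u v + (fderiv ℝ η w - fderiv ℝ η v) (w - u) := by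
  simp only [relEnt, map_sub, sub_apply]
  ring

theorem ContDiffOn.continuousOn_relEnt {V : Set (EuclideanSpace ℝ (Fin n))}
    (hη : ContDiffOn ℝ 1 η V) (hV : IsOpen V) (u : EuclideanSpace ℝ (Fin n)) :
    ContinuousOn (relEnt η u) V :=
  (continuousOn_const.sub hη.continuousOn).sub
    ((hη.continuousOn_fderiv_of_isOpen hV le_rfl).clm_apply (continuousOn_const.sub continuousOn_id))

variable {S : ℝ → EuclideanSpace ℝ (Fin n)} {S' : EuclideanSpace ℝ (Fin n)} {s : Set ℝ} {t : ℝ}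

theorem hasDerivWithinAt_relEnt_left (hη : DifferentiableAt ℝ η (S t))
    (hS : HasDerivWithinAt S S' s t) (v : EuclideanSpace ℝ (Fin n)) :
    HasDerivWithinAt (fun τ => relEnt η (S τ) v) ((fderiv ℝ η (S t) - fderiv ℝ η v) S') s t := by
  rw [sub_apply]
  exact ((hη.hasFDerivAt.comp_hasDerivWithinAt t hS).sub_const (η v)).sub
      ((fderiv ℝ η v).hasFDerivAt.comp_hasDerivWithinAt t (hS.sub_const v))

theorem hasDerivWithinAt_relFlux_left {f' : EuclideanSpace ℝ (Fin n) →L[ℝ] EuclideanSpace ℝ (Fin n)}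
    (hf : HasFDerivAt f f' (S t)) (hq : HasFDerivAt q ((fderiv ℝ η (S t)).comp f') (S t))
    (hS : HasDerivWithinAt S S' s t) (v : EuclideanSpace ℝ (Fin n)) :
    HasDerivWithinAt (fun τ => relFlux η q f (S τ) v)
      ((fderiv ℝ η (S t) - fderiv ℝ η v) (f' S')) s t := by
  rw [sub_apply]
  exact ((hq.comp_hasDerivWithinAt t hS).sub_const (q v)).sub
      ((fderiv ℝ η v).hasFDerivAt.comp_hasDerivWithinAt t
        ((hf.comp_hasDerivWithinAt t hS).sub_const (f v)))

theorem hasDerivWithinAt_relFlux_sub_mul_relEnt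
    {f' : EuclideanSpace ℝ (Fin n) →L[ℝ] EuclideanSpace ℝ (Fin n)} {σ : ℝ → ℝ} {σ' : ℝ}
    {u : EuclideanSpace ℝ (Fin n)} (hf : HasFDerivAt f f' (S t)) (hη : DifferentiableAt ℝ η (S t))
    (hq : HasFDerivAt q ((fderiv ℝ η (S t)).comp f') (S t)) (hS : HasDerivWithinAt S S' s t)
    (hσ : HasDerivWithinAt σ σ' s t) (ht : t ∈ s) (hs : UniqueDiffWithinAt ℝ s t)
    (hRH : ∀ τ ∈ s, f (S τ) - f u = σ τ • (S τ - u)) (v : EuclideanSpace ℝ (Fin n)) :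
    HasDerivWithinAt (fun τ => relFlux η q f (S τ) v - σ τ * relEnt η (S τ) v + σ τ * relEnt η u v)
      (σ' * relEnt η u (S t)) s t := by
  refine (((hasDerivWithinAt_relFlux_left hf hq hS v).sub
    (hσ.mul (hasDerivWithinAt_relEnt_left hη hS v))).add
      (hσ.mul_const (relEnt η u v))).congr_deriv ?_
  rw [hf.apply_eq_of_rankineHugoniot hS hσ ht hs hRH]
  simp only [map_add, map_smul, smul_eq_mul]
  linear_combination -σ' * relEnt_add_relEnt η u (S t) v

end RelativeEntropy

theorem stmt2 {n : ℕ} (V : Set (EuclideanSpace ℝ (Fin n))) (hV : IsOpen V)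
    (f : EuclideanSpace ℝ (Fin n) → EuclideanSpace ℝ (Fin n))
    (η q : EuclideanSpace ℝ (Fin n) → ℝ)
    (hf : ContDiffOn ℝ 1 f V) (hη : ContDiffOn ℝ 1 η V) (hq : ContDiffOn ℝ 1 q V)
    -- entropy–entropy flux compatibility `Dq(w) = Dη(w) ∘ Df(w)`:
    (hcompat : ∀ w ∈ V, fderiv ℝ q w = (fderiv ℝ η w).comp (fderiv ℝ f w))
    (s : ℝ) (hs : 0 < s) (u : EuclideanSpace ℝ (Fin n))
    (S : ℝ → EuclideanSpace ℝ (Fin n)) (σ : ℝ → ℝ)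
    (hS : ContDiffOn ℝ 1 S (Icc 0 s)) (hσ : ContDiffOn ℝ 1 σ (Icc 0 s))
    (hSV : ∀ t ∈ Icc (0:ℝ) s, S t ∈ V) (hS0 : S 0 = u)
    -- Rankine–Hugoniot relation along the shock curve:
    (hRH : ∀ t ∈ Icc (0:ℝ) s, f (S t) - f u = σ t • (S t - u)) :
    ∀ v ∈ V,
      relFlux η q f (S s) v - σ s * relEnt η (S s) v
        = relFlux η q f u v - σ s * relEnt η u v
          + ∫ t in (0:ℝ)..s, derivWithin σ (Icc 0 s) t * relEnt η u (S t) := by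
  intro v _
  have hIcc : UniqueDiffOn ℝ (Icc 0 s) := uniqueDiffOn_Icc hs
  have hderiv : ∀ t ∈ Icc 0 s, HasDerivWithinAt
      (fun τ => relFlux η q f (S τ) v - σ τ * relEnt η (S τ) v + σ τ * relEnt η u v)
      (derivWithin σ (Icc 0 s) t * relEnt η u (S t)) (Icc 0 s) t := by
    intro t ht
    have hSt := hV.mem_nhds (hSV t ht)
    have hqS : HasFDerivAt q ((fderiv ℝ η (S t)).comp (fderiv ℝ f (S t))) (S t) :=
      hcompat _ (hSV t ht) ▸ ((hq.contDiffAt hSt).differentiableAt one_ne_zero).hasFDerivAt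
    exact hasDerivWithinAt_relFlux_sub_mul_relEnt
      ((hf.contDiffAt hSt).differentiableAt one_ne_zero).hasFDerivAt
      ((hη.contDiffAt hSt).differentiableAt one_ne_zero) hqS
      (hS.differentiableOn one_ne_zero t ht).hasDerivWithinAt
      (hσ.differentiableOn one_ne_zero t ht).hasDerivWithinAt ht (hIcc t ht) hRH v
  have hint : IntervalIntegrable (fun t => derivWithin σ (Icc 0 s) t * relEnt η u (S t))
      MeasureTheory.volume 0 s := by
    refine ContinuousOn.intervalIntegrable ?_
    rw [uIcc_of_le hs.le]
    exact (hσ.continuousOn_derivWithin hIcc le_rfl).mul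
      ((hη.continuousOn_relEnt hV u).comp hS.continuousOn hSV)
  rw [intervalIntegral.integral_eq_sub_of_hasDerivAt_of_le hs.le
    (fun t ht => (hderiv t ht).continuousWithinAt)
    (fun t ht => (hderiv t (Ioo_subset_Icc_self ht)).hasDerivAt (Icc_mem_nhds ht.1 ht.2)) hint,
    hS0]
  ring
end

section
/- Let 𝒱 ⊆ ℝⁿ be open, f : 𝒱 → ℝⁿ, η : 𝒱 → ℝ, q : 𝒱 → ℝ all C¹ with Dq(w) = Dη(w) ∘ Df(w) for all w ∈ 𝒱. Fix u_L, u_R ∈ 𝒱 and a > 0, and define η̃(w) := a·η(w|u_L) − η(w|u_R), q̃(w) := a·q(w;u_L) − q(w;u_R), D_cont(u) := −q̃(u) + λ·η̃(u), and D_RH(u₋, u₊, σ) := (q(u₊;u_R) − σ·η(u₊|u_R)) − a·(q(u₋;u_L) − σ·η(u₋|u_L)). Let s > 0, let S : [0, s] → 𝒱 and σ : [0, s] → ℝ be C¹ with S(0) = u, σ(0) = λ, and f(S(t)) − f(u) = σ(t)·(S(t) − u) for all t ∈ [0, s]. Then D_RH(u, S(s), σ(s)) = D_cont(u) + ∫₀ˢ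 σ′(t)·(η̃(u) + η(u|S(t))) dt. -/
/-!
Along the Hugoniot curve, `G(τ) := D_RH(u, S(τ), σ(τ))` starts at `G(0) = D_cont(u)`, so the claim
is the fundamental theorem of calculus for `G`. Differentiating `f(S) - f(u) = σ (S - u)` gives
`Df(S) S' = σ S' + σ' (S - u)`; with `Dq = Dη ∘ Df` the terms in `S'` cancel and
`G' = σ' ((Dη(S) - Dη(u_R))(S - u) - η(S|u_R) + a η(u|u_L))`, which the three-point identity for
relative entropies turns into `σ' (η̃(u) + η(u|S))`.
-/

open Set Filter Topology

theorem fderiv_apply_eq_of_hugoniot {E : Type*} [NormedAddCommGroup E] [NormedSpace ℝ E]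
    {f : E → E} {S : ℝ → E} {σ : ℝ → ℝ} {S' u : E} {σ' t : ℝ}
    (hf : DifferentiableAt ℝ f (S t)) (hS : HasDerivAt S S' t) (hσ : HasDerivAt σ σ' t)
    (hRH : ∀ᶠ τ in 𝓝 t, f (S τ) - f u = σ τ • (S τ - u)) :
    fderiv ℝ f (S t) S' = σ t • S' + σ' • (S t - u) := by
  have hfS : HasDerivAt (fun τ => f (S τ)) (fderiv ℝ f (S t) S') t :=
    hf.hasFDerivAt.comp_hasDerivAt t hS
  have hRHS : HasDerivAt (fun τ => f u + σ τ • (S τ - u)) (σ t • S' + σ' • (S t - u)) t :=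
    (hσ.smul (hS.sub_const u)).const_add (f u)
  refine hfS.unique (hRHS.congr_of_eventuallyEq ?_)
  filter_upwards [hRH] with τ hτ
  rw [← hτ, add_sub_cancel]

section RelativeEntropy

variable {n : ℕ} {η q : EuclideanSpace ℝ (Fin n) → ℝ}
  {f : EuclideanSpace ℝ (Fin n) → EuclideanSpace ℝ (Fin n)}

theorem relEnt_sub_relEnt (η : EuclideanSpace ℝ (Fin n) → ℝ) (u v w : EuclideanSpace ℝ (Fin n)) :
    relEnt η u w - relEnt η u v = (fderiv ℝ η w - fderiv ℝ η v) (w - u) - relEnt η w v := by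
  simp only [relEnt, sub_apply, map_sub]
  ring

theorem hasDerivAt_relFlux_sub_mul_relEnt {S : ℝ → EuclideanSpace ℝ (Fin n)} {σ : ℝ → ℝ}
    {S' u v : EuclideanSpace ℝ (Fin n)} {σ' t : ℝ}
    (hf : DifferentiableAt ℝ f (S t)) (hη : DifferentiableAt ℝ η (S t))
    (hq : HasFDerivAt q ((fderiv ℝ η (S t)).comp (fderiv ℝ f (S t))) (S t))
    (hS : HasDerivAt S S' t) (hσ : HasDerivAt σ σ' t)
    (hRH : ∀ᶠ τ in 𝓝 t, f (S τ) - f u = σ τ • (S τ - u)) :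
    HasDerivAt (fun τ => relFlux η q f (S τ) v - σ τ * relEnt η (S τ) v)
      (σ' * (relEnt η u (S t) - relEnt η u v)) t := by
  have hfS : HasDerivAt (fun τ => f (S τ)) (fderiv ℝ f (S t) S') t :=
    hf.hasFDerivAt.comp_hasDerivAt t hS
  have hqS : HasDerivAt (fun τ => q (S τ)) (fderiv ℝ η (S t) (fderiv ℝ f (S t) S')) t :=
    hq.comp_hasDerivAt t hS
  have hηS : HasDerivAt (fun τ => η (S τ)) (fderiv ℝ η (S t) S') t :=
    hη.hasFDerivAt.comp_hasDerivAt t hS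
  have hsum := ((hqS.sub_const (q v)).sub ((fderiv ℝ η v).hasFDerivAt.comp_hasDerivAt t
    (hfS.sub_const (f v)))).sub (hσ.mul ((hηS.sub_const (η v)).sub
      ((fderiv ℝ η v).hasFDerivAt.comp_hasDerivAt t (hS.sub_const v))))
  refine hsum.congr_deriv ?_
  rw [relEnt_sub_relEnt, fderiv_apply_eq_of_hugoniot hf hS hσ hRH]
  simp only [relEnt, sub_apply, map_add, map_sub, map_smul, smul_eq_mul, Pi.sub_apply,
    Function.comp_apply]
  ring

variable {V : Set (EuclideanSpace ℝ (Fin n))} {I : Set ℝ} {S : ℝ → EuclideanSpace ℝ (Fin n)}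

theorem continuousOn_relFlux_sub_mul_relEnt {σ : ℝ → ℝ} (v : EuclideanSpace ℝ (Fin n))
    (hf : ContinuousOn f V) (hη : ContinuousOn η V) (hq : ContinuousOn q V)
    (hS : ContinuousOn S I) (hσ : ContinuousOn σ I) (hSV : MapsTo S I V) :
    ContinuousOn (fun τ => relFlux η q f (S τ) v - σ τ * relEnt η (S τ) v) I := by
  have hL := (fderiv ℝ η v).continuous
  simp only [relFlux, relEnt]
  exact (((hq.comp hS hSV).sub continuousOn_const).sub
    (hL.comp_continuousOn ((hf.comp hS hSV).sub continuousOn_const))).sub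
    (hσ.mul (((hη.comp hS hSV).sub continuousOn_const).sub
      (hL.comp_continuousOn (hS.sub continuousOn_const))))

theorem continuousOn_relEnt_right (u : EuclideanSpace ℝ (Fin n)) (hV : IsOpen V)
    (hη : ContDiffOn ℝ 1 η V) (hS : ContinuousOn S I) (hSV : MapsTo S I V) :
    ContinuousOn (fun τ => relEnt η u (S τ)) I := by
  simp only [relEnt]
  exact (continuousOn_const.sub (hη.continuousOn.comp hS hSV)).sub
    (((hη.continuousOn_fderiv_of_isOpen hV le_rfl).comp hS hSV).clm_apply
      (continuousOn_const.sub hS))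

end RelativeEntropy

theorem stmt3_general {n : ℕ} (V : Set (EuclideanSpace ℝ (Fin n))) (hV : IsOpen V)
    (f : EuclideanSpace ℝ (Fin n) → EuclideanSpace ℝ (Fin n))
    (η q : EuclideanSpace ℝ (Fin n) → ℝ)
    (hf : ContDiffOn ℝ 1 f V) (hη : ContDiffOn ℝ 1 η V) (hq : ContDiffOn ℝ 1 q V)
    (hcompat : ∀ w ∈ V, fderiv ℝ q w = (fderiv ℝ η w).comp (fderiv ℝ f w))
    (u_L u_R : EuclideanSpace ℝ (Fin n))
    (a : ℝ)
    (s : ℝ) (hs : 0 < s) (u : EuclideanSpace ℝ (Fin n)) (lam : ℝ)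
    (S : ℝ → EuclideanSpace ℝ (Fin n)) (σ : ℝ → ℝ)
    (hS : ContDiffOn ℝ 1 S (Icc 0 s)) (hσ : ContDiffOn ℝ 1 σ (Icc 0 s))
    (hSV : ∀ t ∈ Icc (0:ℝ) s, S t ∈ V) (hS0 : S 0 = u) (hσ0 : σ 0 = lam)
    (hRH : ∀ t ∈ Icc (0:ℝ) s, f (S t) - f u = σ t • (S t - u)) :
    -- `D_RH(u, S(s), σ(s)) = D_cont(u) + ∫₀ˢ σ′(t)·(η̃(u) + η(u|S(t))) dt` where
    -- `η̃(w) = a·η(w|u_L) − η(w|u_R)`, `q̃(w) = a·q(w;u_L) − q(w;u_R)`,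
    -- `D_cont(u) = −q̃(u) + λ·η̃(u)` and
    -- `D_RH(u₋,u₊,σ) = (q(u₊;u_R) − σ·η(u₊|u_R)) − a·(q(u₋;u_L) − σ·η(u₋|u_L))`.
    (relFlux η q f (S s) u_R - σ s * relEnt η (S s) u_R)
        - a * (relFlux η q f u u_L - σ s * relEnt η u u_L)
      = (-(a * relFlux η q f u u_L - relFlux η q f u u_R)
            + lam * (a * relEnt η u u_L - relEnt η u u_R))
        + ∫ t in (0:ℝ)..s, derivWithin σ (Icc 0 s) t
            * ((a * relEnt η u u_L - relEnt η u u_R) + relEnt η u (S t)) := by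
  have hderiv : ∀ t ∈ Ioo 0 s, HasDerivAt
      (fun τ => (relFlux η q f (S τ) u_R - σ τ * relEnt η (S τ) u_R)
        - a * (relFlux η q f u u_L - σ τ * relEnt η u u_L))
      (derivWithin σ (Icc 0 s) t
        * ((a * relEnt η u u_L - relEnt η u u_R) + relEnt η u (S t))) t := by
    intro t ht
    have hnhds : Icc 0 s ∈ 𝓝 t := Icc_mem_nhds ht.1 ht.2
    have hSt : V ∈ 𝓝 (S t) := hV.mem_nhds (hSV t (Ioo_subset_Icc_self ht))
    have hSd := ((hS.differentiableOn one_ne_zero t (Ioo_subset_Icc_self ht)).hasDerivWithinAt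
      ).hasDerivAt hnhds
    have hσd := ((hσ.differentiableOn one_ne_zero t (Ioo_subset_Icc_self ht)).hasDerivWithinAt
      ).hasDerivAt hnhds
    have hqd := hcompat _ (mem_of_mem_nhds hSt) ▸
      (hq.contDiffAt hSt).differentiableAt_one.hasFDerivAt
    refine ((hasDerivAt_relFlux_sub_mul_relEnt (hf.contDiffAt hSt).differentiableAt_one
      (hη.contDiffAt hSt).differentiableAt_one hqd hSd hσd
      (mem_of_superset hnhds hRH) (v := u_R)).sub
      (((hσd.mul_const _).const_sub _).const_mul a)).congr_deriv ?_
    ring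
  have hint : IntervalIntegrable (fun t => derivWithin σ (Icc 0 s) t
      * ((a * relEnt η u u_L - relEnt η u u_R) + relEnt η u (S t))) MeasureTheory.volume 0 s :=
    ((hσ.continuousOn_derivWithin (uniqueDiffOn_Icc hs) le_rfl).mul (continuousOn_const.add
      (continuousOn_relEnt_right u hV hη hS.continuousOn hSV))).intervalIntegrable_of_Icc hs.le
  rw [intervalIntegral.integral_eq_sub_of_hasDerivAt_of_le hs.le ?_ hderiv hint, hS0, hσ0]
  · ring
  · exact (continuousOn_relFlux_sub_mul_relEnt u_R hf.continuousOn hη.continuousOn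
      hq.continuousOn hS.continuousOn hσ.continuousOn hSV).sub
      (continuousOn_const.mul (continuousOn_const.sub (hσ.continuousOn.mul continuousOn_const)))

theorem stmt3 {n : ℕ} (V : Set (EuclideanSpace ℝ (Fin n))) (hV : IsOpen V)
    (f : EuclideanSpace ℝ (Fin n) → EuclideanSpace ℝ (Fin n))
    (η q : EuclideanSpace ℝ (Fin n) → ℝ)
    (hf : ContDiffOn ℝ 1 f V) (hη : ContDiffOn ℝ 1 η V) (hq : ContDiffOn ℝ 1 q V)
    (hcompat : ∀ w ∈ V, fderiv ℝ q w = (fderiv ℝ η w).comp (fderiv ℝ f w))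
    (u_L u_R : EuclideanSpace ℝ (Fin n)) (huL : u_L ∈ V) (huR : u_R ∈ V)
    (a : ℝ) (ha : 0 < a)
    (s : ℝ) (hs : 0 < s) (u : EuclideanSpace ℝ (Fin n)) (lam : ℝ)
    (S : ℝ → EuclideanSpace ℝ (Fin n)) (σ : ℝ → ℝ)
    (hS : ContDiffOn ℝ 1 S (Icc 0 s)) (hσ : ContDiffOn ℝ 1 σ (Icc 0 s))
    (hSV : ∀ t ∈ Icc (0:ℝ) s, S t ∈ V) (hS0 : S 0 = u) (hσ0 : σ 0 = lam)
    (hRH : ∀ t ∈ Icc (0:ℝ) s, f (S t) - f u = σ t • (S t - u)) :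
    -- `D_RH(u, S(s), σ(s)) = D_cont(u) + ∫₀ˢ σ′(t)·(η̃(u) + η(u|S(t))) dt` where
    -- `η̃(w) = a·η(w|u_L) − η(w|u_R)`, `q̃(w) = a·q(w;u_L) − q(w;u_R)`,
    -- `D_cont(u) = −q̃(u) + λ·η̃(u)` and
    -- `D_RH(u₋,u₊,σ) = (q(u₊;u_R) − σ·η(u₊|u_R)) − a·(q(u₋;u_L) − σ·η(u₋|u_L))`.
    (relFlux η q f (S s) u_R - σ s * relEnt η (S s) u_R)
        - a * (relFlux η q f u u_L - σ s * relEnt η u u_L)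
      = (-(a * relFlux η q f u u_L - relFlux η q f u u_R)
            + lam * (a * relEnt η u u_L - relEnt η u u_R))
        + ∫ t in (0:ℝ)..s, derivWithin σ (Icc 0 s) t
            * ((a * relEnt η u u_L - relEnt η u u_R) + relEnt η u (S t)) :=
  stmt3_general V hV f η q hf hη hq hcompat u_L u_R a s hs u lam S σ hS hσ hSV hS0 hσ0 hRH
end

section
/- Let 𝒱 ⊆ ℝⁿ be open, let η : 𝒱 → ℝ be C², let u ∈ 𝒱, r ∈ ℝⁿ, and let S : [0, s̄] → 𝒱 be C¹ with S(0) = u and S′(0) = r. If ∇²η(u)(r, r) > 0, then there exists s₀ ∈ (0, s̄] such that the function g(t) := η(u|S(t)) satisfies g′(t) > 0 for all t ∈ (0, s₀); in particular g is strictly increasing on [0, s₀]. Moreover g′(t) = ⟨∇²η(S(t)) S′(t), S(t) − u⟩ for all t. -/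
/-!
Since `η(u|v) = η(u) − η(v) − ∇η(v)(u − v)`, differentiating along `S` kills the first-order
terms and leaves `g′(t) = ∇²η(S t)(S′ t, S t − u)`. As `S t − u = t r + o(t)` and `S′ t → r`,
this equals `t (∇²η(u)(r, r) + o(1))`, which is positive for small `t > 0`; strict monotonicity
follows from the mean value theorem.
-/

open Set Filter Topology

theorem Filter.Tendsto.clm_apply {α 𝕜 E F : Type*} [NontriviallyNormedField 𝕜]
    [NormedAddCommGroup E] [NormedSpace 𝕜 E] [NormedAddCommGroup F] [NormedSpace 𝕜 F]
    {l : Filter α} {f : α → E →L[𝕜] F} {g : α → E} {f₀ : E →L[𝕜] F} {g₀ : E}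
    (hf : Tendsto f l (𝓝 f₀)) (hg : Tendsto g l (𝓝 g₀)) :
    Tendsto (fun a => f a (g a)) l (𝓝 (f₀ g₀)) :=
  (isBoundedBilinearMap_apply.continuous.tendsto (f₀, g₀)).comp (hf.prodMk_nhds hg)

theorem eventually_pos_apply_apply_sub {E : Type*} [NormedAddCommGroup E] [NormedSpace ℝ E]
    {D : E → E →L[ℝ] E →L[ℝ] ℝ} {S S' : ℝ → E} {u r : E} (hD : ContinuousAt D u)
    (hS : HasDerivWithinAt S r (Ioi 0) 0) (hS0 : S 0 = u) (hS' : Tendsto S' (𝓝[>] 0) (𝓝 r))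
    (hpos : 0 < D u r r) :
    ∀ᶠ t in 𝓝[>] 0, 0 < D (S t) (S' t) (S t - u) := by
  have hslope : Tendsto (fun t => t⁻¹ • (S t - u)) (𝓝[>] 0) (𝓝 r) := by
    refine ((hasDerivWithinAt_iff_tendsto_slope' (lt_irrefl 0)).1 hS).congr fun t => ?_
    rw [slope_def_module, hS0, sub_zero]
  have hSu : Tendsto S (𝓝[>] 0) (𝓝 u) := hS0 ▸ hS.continuousWithinAt
  have hlim : Tendsto (fun t => D (S t) (S' t) (t⁻¹ • (S t - u))) (𝓝[>] 0) (𝓝 (D u r r)) :=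
    ((hD.tendsto.comp hSu).clm_apply hS').clm_apply hslope
  filter_upwards [hlim.eventually (eventually_gt_nhds hpos), self_mem_nhdsWithin]
    with t ht (htpos : 0 < t)
  rw [map_smul, smul_eq_mul] at ht
  exact pos_of_mul_pos_right ht (inv_pos.2 htpos).le

theorem hasDerivWithinAt_relEnt_comp {n : ℕ} {η : EuclideanSpace ℝ (Fin n) → ℝ}
    {S : ℝ → EuclideanSpace ℝ (Fin n)} {S' u : EuclideanSpace ℝ (Fin n)} {s : Set ℝ} {t : ℝ}
    (hη : DifferentiableAt ℝ η (S t)) (hη' : DifferentiableAt ℝ (fderiv ℝ η) (S t))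
    (hS : HasDerivWithinAt S S' s t) :
    HasDerivWithinAt (fun τ => relEnt η u (S τ))
      (fderiv ℝ (fderiv ℝ η) (S t) S' (S t - u)) s t := by
  have hηS := hη.hasFDerivAt.comp_hasDerivWithinAt t hS
  have hη'S := hη'.hasFDerivAt.comp_hasDerivWithinAt t hS
  refine (((hasDerivWithinAt_const t s (η u)).sub hηS).sub
    (hη'S.clm_apply ((hasDerivWithinAt_const t s u).sub hS))).congr_deriv ?_
  simp only [Pi.sub_apply, Function.comp_apply, zero_sub, map_neg, map_sub]
  ring

theorem stmt7 {n : ℕ} (V : Set (EuclideanSpace ℝ (Fin n))) (hV : IsOpen V)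
    (η : EuclideanSpace ℝ (Fin n) → ℝ) (hη : ContDiffOn ℝ 2 η V)
    (u r : EuclideanSpace ℝ (Fin n)) (sbar : ℝ) (hsbar : 0 < sbar)
    (S : ℝ → EuclideanSpace ℝ (Fin n))
    (hS : ContDiffOn ℝ 1 S (Icc 0 sbar)) (hSV : ∀ t ∈ Icc (0:ℝ) sbar, S t ∈ V)
    (hS0 : S 0 = u) (hS0' : derivWithin S (Icc 0 sbar) 0 = r)
    -- `∇²η(u)(r, r) > 0`:
    (hpos : 0 < fderiv ℝ (fderiv ℝ η) u r r) :
    ∃ s₀, 0 < s₀ ∧ s₀ ≤ sbar ∧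
      (∀ t ∈ Ioo (0:ℝ) s₀,
        0 < derivWithin (fun τ => relEnt η u (S τ)) (Icc 0 sbar) t) ∧
      StrictMonoOn (fun τ => relEnt η u (S τ)) (Icc 0 s₀) ∧
      -- `g′(t) = ⟨∇²η(S(t)) S′(t), S(t) − u⟩` for all `t`:
      (∀ t ∈ Icc (0:ℝ) sbar,
        derivWithin (fun τ => relEnt η u (S τ)) (Icc 0 sbar) t
          = fderiv ℝ (fderiv ℝ η) (S t) (derivWithin S (Icc 0 sbar) t) (S t - u)) := by
  set I := Icc (0:ℝ) sbar
  have h0 : (0:ℝ) ∈ I := ⟨le_rfl, hsbar.le⟩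
  have hI : I ∈ 𝓝[>] (0:ℝ) := Icc_mem_nhdsGT hsbar
  have hηC2 : ∀ x ∈ V, ContDiffAt ℝ 2 η x := fun x hx => hη.contDiffAt (hV.mem_nhds hx)
  have hderiv : ∀ t ∈ I, HasDerivWithinAt (fun τ => relEnt η u (S τ))
      (fderiv ℝ (fderiv ℝ η) (S t) (derivWithin S I t) (S t - u)) I t := fun t ht =>
    hasDerivWithinAt_relEnt_comp ((hηC2 _ (hSV t ht)).differentiableAt two_ne_zero)
      (((hηC2 _ (hSV t ht)).fderiv_right (m := 1) (by norm_num)).differentiableAt one_ne_zero)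
      (hS.differentiableOn one_ne_zero t ht).hasDerivWithinAt
  have hderivWithin : ∀ t ∈ I, derivWithin (fun τ => relEnt η u (S τ)) I t
      = fderiv ℝ (fderiv ℝ η) (S t) (derivWithin S I t) (S t - u) := fun t ht =>
    (hderiv t ht).derivWithin (uniqueDiffOn_Icc hsbar t ht)
  have hev : ∀ᶠ t in 𝓝[>] 0, 0 < fderiv ℝ (fderiv ℝ η) (S t) (derivWithin S I t) (S t - u) := by
    have hu : u ∈ V := hS0 ▸ hSV 0 h0
    refine eventually_pos_apply_apply_sub (r := r) ?_ ?_ hS0 ?_ hpos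
    · exact (((hηC2 u hu).fderiv_right (m := 1) (by norm_num)).fderiv_right
        (m := 0) (by norm_num)).continuousAt
    · exact hS0' ▸ (hS.differentiableOn one_ne_zero 0 h0).hasDerivWithinAt.mono_of_mem_nhdsWithin hI
    · exact hS0' ▸ (hS.continuousOn_derivWithin (uniqueDiffOn_Icc hsbar) le_rfl 0 h0
        ).mono_of_mem_nhdsWithin hI
  obtain ⟨ε, hε, hεpos⟩ := mem_nhdsGT_iff_exists_Ioo_subset.1 hev
  have hsub : Icc 0 (min sbar ε) ⊆ I := Icc_subset_Icc le_rfl (min_le_left _ _)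
  have hpos' : ∀ t ∈ Ioo (0:ℝ) (min sbar ε),
      0 < fderiv ℝ (fderiv ℝ η) (S t) (derivWithin S I t) (S t - u) := fun t ht =>
    hεpos ⟨ht.1, ht.2.trans_le (min_le_right _ _)⟩
  refine ⟨min sbar ε, lt_min hsbar hε, min_le_left _ _,
    fun t ht => hderivWithin t (hsub (Ioo_subset_Icc_self ht)) ▸ hpos' t ht, ?_, hderivWithin⟩
  refine strictMonoOn_of_hasDerivWithinAt_pos (convex_Icc _ _)
    (fun t ht => (hderiv t (hsub ht)).continuousWithinAt.mono hsub) ?_ (by rwa [interior_Icc])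
  rw [interior_Icc]
  exact fun t ht =>
    (hderiv t (hsub (Ioo_subset_Icc_self ht))).mono (Ioo_subset_Icc_self.trans hsub)
end

section
/- Let 𝒱 ⊆ ℝⁿ be open, let η : 𝒱 → ℝ be C², fix u_L, u_R ∈ 𝒱 and a ∈ ℝ, let Ω ⊆ 𝒱 be open, and let u⁺ : Ω → 𝒱 be differentiable at u ∈ Ω and satisfy η(w|u⁺(w)) = −(a·η(w|u_L) − η(w|u_R)) for all w ∈ Ω. Then for every direction v ∈ ℝⁿ: ⟨∇η(u_R) − ∇η(u⁺(u)), v⟩ + a·⟨∇η(u) − ∇η(u_L), v⟩ = ⟨∇²η(u⁺(u))(Du⁺(u) v), u − u⁺(u)⟩. -/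
open Filter Topology

section RelativeEntropy

variable {n : ℕ} {η : EuclideanSpace ℝ (Fin n) → ℝ} {u : EuclideanSpace ℝ (Fin n)}

theorem hasFDerivAt_relEnt_left (c : EuclideanSpace ℝ (Fin n))
    (hη : DifferentiableAt ℝ η u) :
    HasFDerivAt (fun w => relEnt η w c) (fderiv ℝ η u - fderiv ℝ η c) u := by
  have hlin := (fderiv ℝ η c).hasFDerivAt.comp u ((hasFDerivAt_id u).sub_const c)
  refine ((hη.hasFDerivAt.sub_const (η c)).sub hlin).congr_fderiv ?_
  rw [ContinuousLinearMap.comp_id]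

theorem HasFDerivAt.relEnt_comp {p : EuclideanSpace ℝ (Fin n) → EuclideanSpace ℝ (Fin n)}
    {Dp : EuclideanSpace ℝ (Fin n) →L[ℝ] EuclideanSpace ℝ (Fin n)} (hp : HasFDerivAt p Dp u)
    (hη : DifferentiableAt ℝ η u) (hηp : DifferentiableAt ℝ η (p u))
    (hη' : DifferentiableAt ℝ (fderiv ℝ η) (p u)) :
    HasFDerivAt (fun w => relEnt η w (p w))
      (fderiv ℝ η u - fderiv ℝ η (p u) - ((fderiv ℝ (fderiv ℝ η) (p u)).comp Dp).flip (u - p u))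
      u := by
  have hlin := (hη'.hasFDerivAt.comp u hp).clm_apply ((hasFDerivAt_id u).sub hp)
  refine ((hη.hasFDerivAt.sub (hηp.hasFDerivAt.comp u hp)).sub hlin).congr_fderiv ?_
  ext v
  simp only [add_apply, sub_apply, ContinuousLinearMap.comp_apply, ContinuousLinearMap.flip_apply,
    ContinuousLinearMap.coe_id', Function.comp_apply, Pi.sub_apply, id_eq, map_sub]
  ring

end RelativeEntropy

theorem stmt10_general {n : ℕ} (V Ω : Set (EuclideanSpace ℝ (Fin n)))
    (hV : IsOpen V) (hΩ : IsOpen Ω) (hΩV : Ω ⊆ V)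
    (η : EuclideanSpace ℝ (Fin n) → ℝ) (hη : ContDiffOn ℝ 2 η V)
    (u_L u_R : EuclideanSpace ℝ (Fin n))
    (a : ℝ)
    (uplus : EuclideanSpace ℝ (Fin n) → EuclideanSpace ℝ (Fin n))
    (hmaps : ∀ w ∈ Ω, uplus w ∈ V)
    (u : EuclideanSpace ℝ (Fin n)) (hu : u ∈ Ω)
    (hup : DifferentiableAt ℝ uplus u)
    -- implicit equation `η(w|u⁺(w)) = −(a·η(w|u_L) − η(w|u_R))` on `Ω`:
    (heq : ∀ w ∈ Ω, relEnt η w (uplus w) = -(a * relEnt η w u_L - relEnt η w u_R)) :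
    -- `⟨∇η(u_R) − ∇η(u⁺(u)), v⟩ + a·⟨∇η(u) − ∇η(u_L), v⟩
    --    = ⟨∇²η(u⁺(u))(Du⁺(u)v), u − u⁺(u)⟩`
    ∀ v, (fderiv ℝ η u_R v - fderiv ℝ η (uplus u) v)
          + a * (fderiv ℝ η u v - fderiv ℝ η u_L v)
        = fderiv ℝ (fderiv ℝ η) (uplus u) (fderiv ℝ uplus u v) (u - uplus u) := by
  intro v
  have hC2 : ∀ x ∈ V, ContDiffAt ℝ 2 η x := fun x hx => hη.contDiffAt (hV.mem_nhds hx)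
  have hηu : DifferentiableAt ℝ η u := (hC2 u (hΩV hu)).differentiableAt (by norm_num)
  have hηup : DifferentiableAt ℝ η (uplus u) :=
    (hC2 _ (hmaps u hu)).differentiableAt (by norm_num)
  have hη'up : DifferentiableAt ℝ (fderiv ℝ η) (uplus u) :=
    ((hC2 _ (hmaps u hu)).fderiv_right (m := 1) (by norm_num)).differentiableAt (by norm_num)
  have hderiv := (hup.hasFDerivAt.relEnt_comp hηu hηup hη'up).add
    (((hasFDerivAt_relEnt_left u_L hηu).const_mul a).sub (hasFDerivAt_relEnt_left u_R hηu))
  have hvanish : (fun w => relEnt η w (uplus w) + (a * relEnt η w u_L - relEnt η w u_R))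
      =ᶠ[𝓝 u] fun _ => 0 := by
    filter_upwards [hΩ.mem_nhds hu] with w hw
    linarith [heq w hw]
  have hzero := congrArg (· v)
    ((hderiv.congr_of_eventuallyEq hvanish.symm).unique (hasFDerivAt_const (0 : ℝ) u))
  simp only [add_apply, sub_apply, smul_apply, zero_apply, ContinuousLinearMap.flip_apply,
    ContinuousLinearMap.comp_apply, smul_eq_mul] at hzero
  linarith

theorem stmt10 {n : ℕ} (V Ω : Set (EuclideanSpace ℝ (Fin n)))
    (hV : IsOpen V) (hΩ : IsOpen Ω) (hΩV : Ω ⊆ V)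
    (η : EuclideanSpace ℝ (Fin n) → ℝ) (hη : ContDiffOn ℝ 2 η V)
    (u_L u_R : EuclideanSpace ℝ (Fin n)) (huL : u_L ∈ V) (huR : u_R ∈ V)
    (a : ℝ)
    (uplus : EuclideanSpace ℝ (Fin n) → EuclideanSpace ℝ (Fin n))
    (hmaps : ∀ w ∈ Ω, uplus w ∈ V)
    (u : EuclideanSpace ℝ (Fin n)) (hu : u ∈ Ω)
    (hup : DifferentiableAt ℝ uplus u)
    -- implicit equation `η(w|u⁺(w)) = −(a·η(w|u_L) − η(w|u_R))` on `Ω`: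
    (heq : ∀ w ∈ Ω, relEnt η w (uplus w) = -(a * relEnt η w u_L - relEnt η w u_R)) :
    -- `⟨∇η(u_R) − ∇η(u⁺(u)), v⟩ + a·⟨∇η(u) − ∇η(u_L), v⟩
    --    = ⟨∇²η(u⁺(u))(Du⁺(u)v), u − u⁺(u)⟩`
    ∀ v, (fderiv ℝ η u_R v - fderiv ℝ η (uplus u) v)
          + a * (fderiv ℝ η u v - fderiv ℝ η u_L v)
        = fderiv ℝ (fderiv ℝ η) (uplus u) (fderiv ℝ uplus u v) (u - uplus u) :=
  stmt10_general V Ω hV hΩ hΩV η hη u_L u_R a uplus hmaps u hu hup heq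
end

section
/- Let 𝒱 ⊆ ℝⁿ be open, f : 𝒱 → ℝⁿ, η : 𝒱 → ℝ, q : 𝒱 → ℝ all C¹ with Dq(w) = Dη(w) ∘ Df(w) for all w ∈ 𝒱, and let η be C². Fix u_L, u_R ∈ 𝒱 and a ∈ ℝ. Let Ω ⊆ 𝒱 be open and let u⁺ : Ω → 𝒱, σ : Ω → ℝ be differentiable at u ∈ Ω and satisfy, for all w ∈ Ω: f(u⁺(w)) − f(w) = σ(w)·(u⁺(w) − w) and η(w|u⁺(w)) = −(a·η(w|u_L) − η(w|u_R)). Define D_max(w) := (q(u⁺(w);u_R) − σ(w)·η(u⁺(w)|u_R)) − a·(q(w;u_L) − σ(w)·η(w|u_L)). Then for every direction v ∈ ℝⁿ: D D_max(u) v = ⟨∇η(u⁺(u)) − ∇η(u_R) − a·(∇η(u) − ∇η(u_L)), (Df(u) − σ(u)·I) v⟩. -/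
/-- `D_max(w) = (q(u⁺(w);u_R) − σ(w)·η(u⁺(w)|u_R)) − a·(q(w;u_L) − σ(w)·η(w|u_L))`. -/
noncomputable def Dmax {n : ℕ} (η q : EuclideanSpace ℝ (Fin n) → ℝ)
    (f uplus : EuclideanSpace ℝ (Fin n) → EuclideanSpace ℝ (Fin n))
    (σ : EuclideanSpace ℝ (Fin n) → ℝ)
    (u_L u_R : EuclideanSpace ℝ (Fin n)) (a : ℝ)
    (w : EuclideanSpace ℝ (Fin n)) : ℝ :=
  (relFlux η q f (uplus w) u_R - σ w * relEnt η (uplus w) u_R)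
    - a * (relFlux η q f w u_L - σ w * relEnt η w u_L)

/-!
Differentiating the Rankine–Hugoniot relation gives
`(Df(u⁺) − σ) Du⁺ v = (Df(u) − σ) v + Dσ v · (u⁺ − u)`. With `Dq = Dη ∘ Df`, the derivative of
`D_max` is therefore the claimed expression plus `Dσ v` times
`(∇η(u⁺) − ∇η(u_R))(u⁺ − u) − η(u⁺|u_R) + a·η(u|u_L)`. By the three-point identity
`η(y|z) − η(x|z) + η(x|y) = (∇η(y) − ∇η(z))(y − x)` this factor equals
`η(u|u⁺) − η(u|u_R) + a·η(u|u_L)`, which vanishes by the implicit equation defining `u⁺`.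
-/

open Filter Topology ContinuousLinearMap

section RelativeEntropy

variable {n : ℕ} {η q : EuclideanSpace ℝ (Fin n) → ℝ}
  {f : EuclideanSpace ℝ (Fin n) → EuclideanSpace ℝ (Fin n)}

theorem relEnt_sub_relEnt_add_relEnt (x y z : EuclideanSpace ℝ (Fin n)) :
    relEnt η y z - relEnt η x z + relEnt η x y = (fderiv ℝ η y - fderiv ℝ η z) (y - x) := by
  simp only [relEnt, sub_apply, map_sub]
  ring

variable {E : Type*} [NormedAddCommGroup E] [NormedSpace ℝ E]

theorem HasFDerivAt.relFlux_sub_mul_relEnt {g : E → EuclideanSpace ℝ (Fin n)}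
    {g' : E →L[ℝ] EuclideanSpace ℝ (Fin n)} {s : E → ℝ} {s' : E →L[ℝ] ℝ} {x : E}
    (hg : HasFDerivAt g g' x) (hs : HasFDerivAt s s' x) (z : EuclideanSpace ℝ (Fin n))
    (hη : DifferentiableAt ℝ η (g x)) (hq : DifferentiableAt ℝ q (g x))
    (hf : DifferentiableAt ℝ f (g x))
    (hcompat : fderiv ℝ q (g x) = (fderiv ℝ η (g x)).comp (fderiv ℝ f (g x))) :
    HasFDerivAt (fun w => relFlux η q f (g w) z - s w * relEnt η (g w) z)
      ((fderiv ℝ η (g x) - fderiv ℝ η z).comp ((fderiv ℝ f (g x)).comp g' - s x • g')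
        - relEnt η (g x) z • s') x := by
  have hflux : HasFDerivAt (fun w => relFlux η q f (g w) z)
      ((fderiv ℝ q (g x)).comp g' - (fderiv ℝ η z).comp ((fderiv ℝ f (g x)).comp g')) x :=
    ((hq.hasFDerivAt.comp x hg).sub_const _).sub
      ((fderiv ℝ η z).hasFDerivAt.comp x ((hf.hasFDerivAt.comp x hg).sub_const _))
  have hent : HasFDerivAt (fun w => relEnt η (g w) z)
      ((fderiv ℝ η (g x)).comp g' - (fderiv ℝ η z).comp g') x :=
    ((hη.hasFDerivAt.comp x hg).sub_const _).sub
      ((fderiv ℝ η z).hasFDerivAt.comp x (hg.sub_const _))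
  refine (hflux.sub (hs.mul hent)).congr_fderiv ?_
  ext v
  simp only [hcompat, sub_apply, add_apply, comp_apply, smul_apply,
    map_sub, map_smul, smul_eq_mul]
  ring

end RelativeEntropy

theorem rankineHugoniot_linearized {E : Type*} [NormedAddCommGroup E] [NormedSpace ℝ E]
    {f g : E → E} {s : E → ℝ} {f₀ f₁ g' : E →L[ℝ] E} {s' : E →L[ℝ] ℝ} {x : E}
    (hf₀ : HasFDerivAt f f₀ x) (hf₁ : HasFDerivAt f f₁ (g x)) (hg : HasFDerivAt g g' x)
    (hs : HasFDerivAt s s' x) (hRH : ∀ᶠ w in 𝓝 x, f (g w) - f w = s w • (g w - w)) (v : E) :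
    f₁ (g' v) - s x • g' v = (f₀ v - s x • v) + s' v • (g x - x) := by
  have hzero : HasFDerivAt (fun w => f (g w) - f w - s w • (g w - w))
      (f₁.comp g' - f₀ - (s x • (g' - ContinuousLinearMap.id ℝ E) + s'.smulRight (g x - x))) x :=
    ((hf₁.comp x hg).sub hf₀).sub (hs.smul (hg.sub (hasFDerivAt_id x)))
  have hvanish := congrArg (· v) <| hzero.unique <|
    (hasFDerivAt_const 0 x).congr_of_eventuallyEq <| hRH.mono fun w hw => sub_eq_zero.mpr hw
  simp only [sub_apply, add_apply, comp_apply, smul_apply, coe_id', id_eq,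
    smulRight_apply, zero_apply] at hvanish
  rw [← sub_eq_zero, ← hvanish]
  module

theorem stmt11_general {n : ℕ} (V Ω : Set (EuclideanSpace ℝ (Fin n)))
    (hV : IsOpen V) (hΩ : IsOpen Ω) (hΩV : Ω ⊆ V)
    (f : EuclideanSpace ℝ (Fin n) → EuclideanSpace ℝ (Fin n))
    (η q : EuclideanSpace ℝ (Fin n) → ℝ)
    (hf : ContDiffOn ℝ 1 f V) (hη : ContDiffOn ℝ 2 η V) (hq : ContDiffOn ℝ 1 q V)
    (hcompat : ∀ w ∈ V, fderiv ℝ q w = (fderiv ℝ η w).comp (fderiv ℝ f w))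
    (u_L u_R : EuclideanSpace ℝ (Fin n)) (a : ℝ)
    (uplus : EuclideanSpace ℝ (Fin n) → EuclideanSpace ℝ (Fin n))
    (σ : EuclideanSpace ℝ (Fin n) → ℝ)
    (hmaps : ∀ w ∈ Ω, uplus w ∈ V)
    (u : EuclideanSpace ℝ (Fin n)) (hu : u ∈ Ω)
    (hup : DifferentiableAt ℝ uplus u) (hσ : DifferentiableAt ℝ σ u)
    -- Rankine–Hugoniot relation on `Ω`:
    (hRH : ∀ w ∈ Ω, f (uplus w) - f w = σ w • (uplus w - w))
    -- implicit equation `η(w|u⁺(w)) = −(a·η(w|u_L) − η(w|u_R))` on `Ω`: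
    (heq : ∀ w ∈ Ω, relEnt η w (uplus w) = -(a * relEnt η w u_L - relEnt η w u_R)) :
    -- `D D_max(u) v = ⟨∇η(u⁺(u)) − ∇η(u_R) − a(∇η(u) − ∇η(u_L)), (Df(u) − σ(u)I)v⟩`
    ∀ v, fderiv ℝ (Dmax η q f uplus σ u_L u_R a) u v
      = fderiv ℝ η (uplus u) (fderiv ℝ f u v - σ u • v)
        - fderiv ℝ η u_R (fderiv ℝ f u v - σ u • v)
        - a * (fderiv ℝ η u (fderiv ℝ f u v - σ u • v)
                - fderiv ℝ η u_L (fderiv ℝ f u v - σ u • v)) := by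
  intro v
  have hdiff : ∀ x ∈ V,
      DifferentiableAt ℝ η x ∧ DifferentiableAt ℝ q x ∧ DifferentiableAt ℝ f x := fun x hx =>
    ⟨(hη.differentiableOn two_ne_zero).differentiableAt (hV.mem_nhds hx),
      (hq.differentiableOn one_ne_zero).differentiableAt (hV.mem_nhds hx),
      (hf.differentiableOn one_ne_zero).differentiableAt (hV.mem_nhds hx)⟩
  have huV : u ∈ V := hΩV hu
  have hPV : uplus u ∈ V := hmaps u hu
  obtain ⟨hηu, hqu, hfu⟩ := hdiff u huV
  obtain ⟨hηP, hqP, hfP⟩ := hdiff (uplus u) hPV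
  have hR := hup.hasFDerivAt.relFlux_sub_mul_relEnt hσ.hasFDerivAt u_R hηP hqP hfP
    (hcompat _ hPV)
  have hL := (hasFDerivAt_id u).relFlux_sub_mul_relEnt hσ.hasFDerivAt u_L hηu hqu hfu
    (hcompat _ huV)
  have hD : HasFDerivAt (Dmax η q f uplus σ u_L u_R a) _ u := hR.sub (hL.const_mul a)
  have hRHlin := rankineHugoniot_linearized hfu.hasFDerivAt hfP.hasFDerivAt hup.hasFDerivAt
    hσ.hasFDerivAt (eventually_of_mem (hΩ.mem_nhds hu) hRH) v
  have hthree := relEnt_sub_relEnt_add_relEnt (η := η) u (uplus u) u_R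
  rw [hD.fderiv]
  simp only [sub_apply, smul_apply, comp_apply, coe_id', id_eq]
  rw [hRHlin]
  simp only [map_add, map_smul, smul_eq_mul, sub_apply] at hthree ⊢
  linear_combination (fderiv ℝ σ u v) * (heq u hu - hthree)

theorem stmt11 {n : ℕ} (V Ω : Set (EuclideanSpace ℝ (Fin n)))
    (hV : IsOpen V) (hΩ : IsOpen Ω) (hΩV : Ω ⊆ V)
    (f : EuclideanSpace ℝ (Fin n) → EuclideanSpace ℝ (Fin n))
    (η q : EuclideanSpace ℝ (Fin n) → ℝ)
    (hf : ContDiffOn ℝ 1 f V) (hη : ContDiffOn ℝ 2 η V) (hq : ContDiffOn ℝ 1 q V)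
    (hcompat : ∀ w ∈ V, fderiv ℝ q w = (fderiv ℝ η w).comp (fderiv ℝ f w))
    (u_L u_R : EuclideanSpace ℝ (Fin n)) (huL : u_L ∈ V) (huR : u_R ∈ V) (a : ℝ)
    (uplus : EuclideanSpace ℝ (Fin n) → EuclideanSpace ℝ (Fin n))
    (σ : EuclideanSpace ℝ (Fin n) → ℝ)
    (hmaps : ∀ w ∈ Ω, uplus w ∈ V)
    (u : EuclideanSpace ℝ (Fin n)) (hu : u ∈ Ω)
    (hup : DifferentiableAt ℝ uplus u) (hσ : DifferentiableAt ℝ σ u)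
    -- Rankine–Hugoniot relation on `Ω`:
    (hRH : ∀ w ∈ Ω, f (uplus w) - f w = σ w • (uplus w - w))
    -- implicit equation `η(w|u⁺(w)) = −(a·η(w|u_L) − η(w|u_R))` on `Ω`:
    (heq : ∀ w ∈ Ω, relEnt η w (uplus w) = -(a * relEnt η w u_L - relEnt η w u_R)) :
    -- `D D_max(u) v = ⟨∇η(u⁺(u)) − ∇η(u_R) − a(∇η(u) − ∇η(u_L)), (Df(u) − σ(u)I)v⟩`
    ∀ v, fderiv ℝ (Dmax η q f uplus σ u_L u_R a) u v
      = fderiv ℝ η (uplus u) (fderiv ℝ f u v - σ u • v)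
        - fderiv ℝ η u_R (fderiv ℝ f u v - σ u • v)
        - a * (fderiv ℝ η u (fderiv ℝ f u v - σ u • v)
                - fderiv ℝ η u_L (fderiv ℝ f u v - σ u • v)) :=
  stmt11_general V Ω hV hΩ hΩV f η q hf hη hq hcompat u_L u_R a uplus σ hmaps u hu hup hσ hRH heq
end

section
/- Let 𝒱 ⊆ ℝⁿ be open, f : 𝒱 → ℝⁿ C², η : 𝒱 → ℝ C², q : 𝒱 → ℝ C¹ with Dq(w) = Dη(w) ∘ Df(w) for all w ∈ 𝒱. Fix u_L, u_R ∈ 𝒱 and a ∈ ℝ. Let Ω ⊆ 𝒱 be open and let u⁺ : Ω → 𝒱, σ : Ω → ℝ be C¹ and satisfy, for all w ∈ Ω: f(u⁺(w)) − f(w) = σ(w)·(u⁺(w) − w) and η(w|u⁺(w)) = −(a·η(w|u_L) − η(w|u_R)). Define D_max(w) := (q(u⁺(w);u_R) − σ(w)·η(u⁺(w)|u_R)) − a·(q(w;u_L) − σ(w)·η(w|u_L)). Then D_max is twice differentiable at every u ∈ Ω and for all v, w ∈ ℝⁿ: D²D_max(u)[v, w] = ⟨∇²η(u⁺(u))(Du⁺(u)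 v) − a·∇²η(u) v, (Df(u) − σ(u)·I) w⟩ + ⟨∇η(u⁺(u)) − ∇η(u_R) − a·(∇η(u) − ∇η(u_L)), D²f(u)[v, w] − (Dσ(u) v)·w⟩. -/
open Topology

/-!
Differentiating the Rankine–Hugoniot relation `f(u⁺) − f(w) = σ (u⁺ − w)` turns
`(Df(u⁺) − σ) Du⁺ v` into `(Df(w) − σ) v + (Dσ v)(u⁺ − w)`. Together with the three-point identity
for relative entropies, the implicit equation for `u⁺` makes every term carrying `Dσ` cancel, so
`D D_max(w) = (∇η(u⁺(w)) − ∇η(u_R) − a(∇η(w) − ∇η(u_L))) ∘ (Df(w) − σ(w) I)`.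
This gradient is a product of two `C¹` factors, and the product rule gives the Hessian.
-/

open ContinuousLinearMap

section Calculus

variable {E F : Type*} [NormedAddCommGroup E] [NormedSpace ℝ E] [NormedAddCommGroup F]
  [NormedSpace ℝ F]

theorem ContDiffOn.hasFDerivAt_fderiv {f : E → F} {s : Set E} {x : E}
    (hf : ContDiffOn ℝ 2 f s) (hs : IsOpen s) (hx : x ∈ s) :
    HasFDerivAt (fderiv ℝ f) (fderiv ℝ (fderiv ℝ f) x) x :=
  ((hf.fderiv_of_isOpen hs (m := 1) (by norm_num)).differentiableOn one_ne_zero).hasFDerivAt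
    (hs.mem_nhds hx)

theorem rankineHugoniot_linearized_s12 {f g : E → E} {σ : E → ℝ} {w : E} {Fg F G : E →L[ℝ] E}
    {S : E →L[ℝ] ℝ} (hfg : HasFDerivAt f Fg (g w)) (hf : HasFDerivAt f F w)
    (hg : HasFDerivAt g G w) (hσ : HasFDerivAt σ S w)
    (hRH : ∀ᶠ x in 𝓝 w, f (g x) - f x = σ x • (g x - x)) (v : E) :
    Fg (G v) - σ w • G v = F v - σ w • v + S v • (g w - w) := by
  have hlhs : HasFDerivAt (fun x => f (g x) - f x) (Fg.comp G - F) w :=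
    (hfg.comp w hg).sub hf
  have hrhs : HasFDerivAt (fun x => f (g x) - f x)
      (σ w • (G - ContinuousLinearMap.id ℝ E) + S.smulRight (g w - w)) w :=
    (hσ.smul (hg.sub (hasFDerivAt_id w))).congr_of_eventuallyEq hRH
  have h := congrArg (· v) (hlhs.unique hrhs)
  simp only [sub_apply, add_apply, comp_apply, smul_apply, id_apply, smulRight_apply] at h
  linear_combination (norm := module) h

noncomputable def dmaxGrad (η : E → ℝ) (f uplus : E → E) (σ : E → ℝ) (u_L u_R : E) (a : ℝ)
    (w : E) : E →L[ℝ] ℝ :=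
  ((fderiv ℝ η (uplus w) - fderiv ℝ η u_R) - a • (fderiv ℝ η w - fderiv ℝ η u_L)).comp
    (fderiv ℝ f w - σ w • ContinuousLinearMap.id ℝ E)

theorem hasFDerivAt_dmaxGrad {η : E → ℝ} {f uplus : E → E} {σ : E → ℝ} {u_L u_R : E} {a : ℝ}
    {u : E} {Hp H : E →L[ℝ] E →L[ℝ] ℝ} {U : E →L[ℝ] E} {F₂ : E →L[ℝ] E →L[ℝ] E} {S : E →L[ℝ] ℝ}
    (hηp : HasFDerivAt (fderiv ℝ η) Hp (uplus u)) (hη : HasFDerivAt (fderiv ℝ η) H u)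
    (hup : HasFDerivAt uplus U u) (hf : HasFDerivAt (fderiv ℝ f) F₂ u)
    (hσ : HasFDerivAt σ S u) :
    HasFDerivAt (dmaxGrad η f uplus σ u_L u_R a)
      ((compL ℝ E E ℝ ((fderiv ℝ η (uplus u) - fderiv ℝ η u_R)
          - a • (fderiv ℝ η u - fderiv ℝ η u_L))).comp
          (F₂ - S.smulRight (ContinuousLinearMap.id ℝ E))
        + ((compL ℝ E E ℝ).flip (fderiv ℝ f u - σ u • ContinuousLinearMap.id ℝ E)).comp
          (Hp.comp U - a • H)) u := by
  have hleft := ((hηp.comp u hup).sub_const (fderiv ℝ η u_R)).sub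
    ((hη.sub_const (fderiv ℝ η u_L)).const_smul a)
  exact hleft.clm_comp (hf.sub (hσ.smul_const (ContinuousLinearMap.id ℝ E)))

end Calculus

section RelativeEntropy

variable {n : ℕ} {X : Type*} [NormedAddCommGroup X] [NormedSpace ℝ X]

theorem relEnt_three_point (η : EuclideanSpace ℝ (Fin n) → ℝ) (w p r : EuclideanSpace ℝ (Fin n)) :
    relEnt η w p - relEnt η w r + relEnt η p r = (fderiv ℝ η r - fderiv ℝ η p) (w - p) := by
  simp only [relEnt, sub_apply, map_sub]
  ring

theorem hasFDerivAt_relEnt_left_s12 {η : EuclideanSpace ℝ (Fin n) → ℝ}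
    {g : X → EuclideanSpace ℝ (Fin n)} {G : X →L[ℝ] EuclideanSpace ℝ (Fin n)} {x : X}
    (hη : HasFDerivAt η (fderiv ℝ η (g x)) (g x)) (hg : HasFDerivAt g G x)
    (r : EuclideanSpace ℝ (Fin n)) :
    HasFDerivAt (fun y => relEnt η (g y) r) ((fderiv ℝ η (g x) - fderiv ℝ η r).comp G) x := by
  have h := ((hη.comp x hg).sub_const (η r)).sub
    ((fderiv ℝ η r).hasFDerivAt.comp x (hg.sub_const r))
  rwa [← sub_comp] at h

theorem hasFDerivAt_relFlux_left {η q : EuclideanSpace ℝ (Fin n) → ℝ}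
    {f : EuclideanSpace ℝ (Fin n) → EuclideanSpace ℝ (Fin n)}
    {g : X → EuclideanSpace ℝ (Fin n)} {F : EuclideanSpace ℝ (Fin n) →L[ℝ] EuclideanSpace ℝ (Fin n)}
    {G : X →L[ℝ] EuclideanSpace ℝ (Fin n)} {x : X}
    (hq : HasFDerivAt q ((fderiv ℝ η (g x)).comp F) (g x)) (hf : HasFDerivAt f F (g x))
    (hg : HasFDerivAt g G x) (r : EuclideanSpace ℝ (Fin n)) :
    HasFDerivAt (fun y => relFlux η q f (g y) r)
      ((fderiv ℝ η (g x) - fderiv ℝ η r).comp (F.comp G)) x := by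
  have h := ((hq.comp x hg).sub_const (q r)).sub
    ((fderiv ℝ η r).hasFDerivAt.comp x ((hf.comp x hg).sub_const (f r)))
  rwa [comp_assoc, ← sub_comp] at h

theorem hasFDerivAt_relFlux_sub_mul_relEnt {η q : EuclideanSpace ℝ (Fin n) → ℝ}
    {f : EuclideanSpace ℝ (Fin n) → EuclideanSpace ℝ (Fin n)} {σ : X → ℝ}
    {g : X → EuclideanSpace ℝ (Fin n)} {F : EuclideanSpace ℝ (Fin n) →L[ℝ] EuclideanSpace ℝ (Fin n)}
    {G : X →L[ℝ] EuclideanSpace ℝ (Fin n)} {S : X →L[ℝ] ℝ} {x : X}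
    (hη : HasFDerivAt η (fderiv ℝ η (g x)) (g x))
    (hq : HasFDerivAt q ((fderiv ℝ η (g x)).comp F) (g x)) (hf : HasFDerivAt f F (g x))
    (hg : HasFDerivAt g G x) (hσ : HasFDerivAt σ S x) (r : EuclideanSpace ℝ (Fin n)) :
    HasFDerivAt (fun y => relFlux η q f (g y) r - σ y * relEnt η (g y) r)
      ((fderiv ℝ η (g x) - fderiv ℝ η r).comp (F.comp G - σ x • G)
        - relEnt η (g x) r • S) x := by
  refine ((hasFDerivAt_relFlux_left hq hf hg r).sub
    (hσ.mul (hasFDerivAt_relEnt_left_s12 hη hg r))).congr_fderiv ?_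
  ext v
  simp only [sub_apply, add_apply, comp_apply, smul_apply, map_sub, map_smul, smul_eq_mul]
  ring

theorem hasFDerivAt_Dmax {η q : EuclideanSpace ℝ (Fin n) → ℝ}
    {f uplus : EuclideanSpace ℝ (Fin n) → EuclideanSpace ℝ (Fin n)}
    {σ : EuclideanSpace ℝ (Fin n) → ℝ} {u_L u_R : EuclideanSpace ℝ (Fin n)} {a : ℝ}
    {w : EuclideanSpace ℝ (Fin n)} {U : EuclideanSpace ℝ (Fin n) →L[ℝ] EuclideanSpace ℝ (Fin n)}
    {S : EuclideanSpace ℝ (Fin n) →L[ℝ] ℝ}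
    (hηp : HasFDerivAt η (fderiv ℝ η (uplus w)) (uplus w)) (hη : HasFDerivAt η (fderiv ℝ η w) w)
    (hfp : HasFDerivAt f (fderiv ℝ f (uplus w)) (uplus w)) (hf : HasFDerivAt f (fderiv ℝ f w) w)
    (hqp : HasFDerivAt q ((fderiv ℝ η (uplus w)).comp (fderiv ℝ f (uplus w))) (uplus w))
    (hq : HasFDerivAt q ((fderiv ℝ η w).comp (fderiv ℝ f w)) w)
    (hup : HasFDerivAt uplus U w) (hσ : HasFDerivAt σ S w)
    (hRH : ∀ᶠ x in 𝓝 w, f (uplus x) - f x = σ x • (uplus x - x))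
    (heq : relEnt η w (uplus w) = -(a * relEnt η w u_L - relEnt η w u_R)) :
    HasFDerivAt (Dmax η q f uplus σ u_L u_R a) (dmaxGrad η f uplus σ u_L u_R a w) w := by
  have hshock := hasFDerivAt_relFlux_sub_mul_relEnt hηp hqp hfp hup hσ u_R
  have hleft := hasFDerivAt_relFlux_sub_mul_relEnt (g := id) hη hq hf (hasFDerivAt_id w) hσ u_L
  refine (hshock.sub (hleft.const_mul a)).congr_fderiv ?_
  have hthree := relEnt_three_point η w (uplus w) u_R
  ext v
  have hshift := congrArg (fderiv ℝ η (uplus w) - fderiv ℝ η u_R)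
    (rankineHugoniot_linearized_s12 hfp hf hup hσ hRH v)
  simp only [dmaxGrad, sub_apply, comp_apply, smul_apply, id_apply, id_eq, smul_eq_mul, map_sub,
    map_add, map_smul] at hshift hthree ⊢
  linear_combination hshift + S v * (heq - hthree)

end RelativeEntropy

theorem stmt12_general {n : ℕ} (V Ω : Set (EuclideanSpace ℝ (Fin n)))
    (hV : IsOpen V) (hΩ : IsOpen Ω) (hΩV : Ω ⊆ V)
    (f : EuclideanSpace ℝ (Fin n) → EuclideanSpace ℝ (Fin n))
    (η q : EuclideanSpace ℝ (Fin n) → ℝ)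
    (hf : ContDiffOn ℝ 2 f V) (hη : ContDiffOn ℝ 2 η V) (hq : ContDiffOn ℝ 1 q V)
    (hcompat : ∀ w ∈ V, fderiv ℝ q w = (fderiv ℝ η w).comp (fderiv ℝ f w))
    (u_L u_R : EuclideanSpace ℝ (Fin n)) (a : ℝ)
    (uplus : EuclideanSpace ℝ (Fin n) → EuclideanSpace ℝ (Fin n))
    (σ : EuclideanSpace ℝ (Fin n) → ℝ)
    (hmaps : ∀ w ∈ Ω, uplus w ∈ V)
    (hup : ContDiffOn ℝ 1 uplus Ω) (hσ : ContDiffOn ℝ 1 σ Ω)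
    -- Rankine–Hugoniot relation on `Ω`:
    (hRH : ∀ w ∈ Ω, f (uplus w) - f w = σ w • (uplus w - w))
    -- implicit equation `η(w|u⁺(w)) = −(a·η(w|u_L) − η(w|u_R))` on `Ω`:
    (heq : ∀ w ∈ Ω, relEnt η w (uplus w) = -(a * relEnt η w u_L - relEnt η w u_R)) :
    ∀ u ∈ Ω,
      -- `D_max` is twice differentiable at `u`:
      (∀ᶠ w in 𝓝 u, DifferentiableAt ℝ (Dmax η q f uplus σ u_L u_R a) w) ∧
      DifferentiableAt ℝ (fderiv ℝ (Dmax η q f uplus σ u_L u_R a)) u ∧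
      -- `D²D_max(u)[v, w] = ⟨∇²η(u⁺(u))(Du⁺(u)v) − a∇²η(u)v, (Df(u) − σ(u)I)w⟩
      --   + ⟨∇η(u⁺(u)) − ∇η(u_R) − a(∇η(u) − ∇η(u_L)), D²f(u)[v,w] − (Dσ(u)v)w⟩`
      ∀ v w, fderiv ℝ (fderiv ℝ (Dmax η q f uplus σ u_L u_R a)) u v w
        = (fderiv ℝ (fderiv ℝ η) (uplus u) (fderiv ℝ uplus u v)
              (fderiv ℝ f u w - σ u • w)
            - a * fderiv ℝ (fderiv ℝ η) u v (fderiv ℝ f u w - σ u • w))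
          + (fderiv ℝ η (uplus u)
                (fderiv ℝ (fderiv ℝ f) u v w - fderiv ℝ σ u v • w)
              - fderiv ℝ η u_R
                (fderiv ℝ (fderiv ℝ f) u v w - fderiv ℝ σ u v • w)
              - a * (fderiv ℝ η u
                      (fderiv ℝ (fderiv ℝ f) u v w - fderiv ℝ σ u v • w)
                    - fderiv ℝ η u_L
                      (fderiv ℝ (fderiv ℝ f) u v w - fderiv ℝ σ u v • w))) := by
  have hfV := fun {x} (hx : x ∈ V) => (hf.differentiableOn two_ne_zero).hasFDerivAt (hV.mem_nhds hx)
  have hηV := fun {x} (hx : x ∈ V) => (hη.differentiableOn two_ne_zero).hasFDerivAt (hV.mem_nhds hx)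
  have hqV := fun {x} (hx : x ∈ V) =>
    hcompat x hx ▸ (hq.differentiableOn one_ne_zero).hasFDerivAt (hV.mem_nhds hx)
  have hupΩ := fun {x} (hx : x ∈ Ω) =>
    (hup.differentiableOn one_ne_zero).hasFDerivAt (hΩ.mem_nhds hx)
  have hσΩ := fun {x} (hx : x ∈ Ω) =>
    (hσ.differentiableOn one_ne_zero).hasFDerivAt (hΩ.mem_nhds hx)
  have hD : ∀ w ∈ Ω, HasFDerivAt (Dmax η q f uplus σ u_L u_R a)
      (dmaxGrad η f uplus σ u_L u_R a w) w := fun w hw =>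
    hasFDerivAt_Dmax (hηV (hmaps w hw)) (hηV (hΩV hw)) (hfV (hmaps w hw)) (hfV (hΩV hw))
      (hqV (hmaps w hw)) (hqV (hΩV hw)) (hupΩ hw) (hσΩ hw)
      ((hΩ.eventually_mem hw).mono hRH) (heq w hw)
  intro u hu
  have hgrad : fderiv ℝ (Dmax η q f uplus σ u_L u_R a) =ᶠ[𝓝 u] dmaxGrad η f uplus σ u_L u_R a :=
    (hΩ.eventually_mem hu).mono fun w hw => (hD w hw).fderiv
  have hHess := hasFDerivAt_dmaxGrad (u_L := u_L) (u_R := u_R) (a := a)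
    ((hη.hasFDerivAt_fderiv hV (hmaps u hu))) (hη.hasFDerivAt_fderiv hV (hΩV hu))
    (hupΩ hu) (hf.hasFDerivAt_fderiv hV (hΩV hu)) (hσΩ hu)
  refine ⟨(hΩ.eventually_mem hu).mono fun w hw => (hD w hw).differentiableAt,
    hgrad.differentiableAt_iff.mpr hHess.differentiableAt, fun v w => ?_⟩
  rw [hgrad.fderiv_eq, hHess.fderiv]
  simp only [add_apply, comp_apply, flip_apply, compL_apply, sub_apply, smul_apply,
    smulRight_apply, id_apply, smul_eq_mul, map_sub, map_smul]
  ring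

theorem stmt12 {n : ℕ} (V Ω : Set (EuclideanSpace ℝ (Fin n)))
    (hV : IsOpen V) (hΩ : IsOpen Ω) (hΩV : Ω ⊆ V)
    (f : EuclideanSpace ℝ (Fin n) → EuclideanSpace ℝ (Fin n))
    (η q : EuclideanSpace ℝ (Fin n) → ℝ)
    (hf : ContDiffOn ℝ 2 f V) (hη : ContDiffOn ℝ 2 η V) (hq : ContDiffOn ℝ 1 q V)
    (hcompat : ∀ w ∈ V, fderiv ℝ q w = (fderiv ℝ η w).comp (fderiv ℝ f w))
    (u_L u_R : EuclideanSpace ℝ (Fin n)) (huL : u_L ∈ V) (huR : u_R ∈ V) (a : ℝ)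
    (uplus : EuclideanSpace ℝ (Fin n) → EuclideanSpace ℝ (Fin n))
    (σ : EuclideanSpace ℝ (Fin n) → ℝ)
    (hmaps : ∀ w ∈ Ω, uplus w ∈ V)
    (hup : ContDiffOn ℝ 1 uplus Ω) (hσ : ContDiffOn ℝ 1 σ Ω)
    -- Rankine–Hugoniot relation on `Ω`:
    (hRH : ∀ w ∈ Ω, f (uplus w) - f w = σ w • (uplus w - w))
    -- implicit equation `η(w|u⁺(w)) = −(a·η(w|u_L) − η(w|u_R))` on `Ω`:
    (heq : ∀ w ∈ Ω, relEnt η w (uplus w) = -(a * relEnt η w u_L - relEnt η w u_R)) :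
    ∀ u ∈ Ω,
      -- `D_max` is twice differentiable at `u`:
      (∀ᶠ w in 𝓝 u, DifferentiableAt ℝ (Dmax η q f uplus σ u_L u_R a) w) ∧
      DifferentiableAt ℝ (fderiv ℝ (Dmax η q f uplus σ u_L u_R a)) u ∧
      -- `D²D_max(u)[v, w] = ⟨∇²η(u⁺(u))(Du⁺(u)v) − a∇²η(u)v, (Df(u) − σ(u)I)w⟩
      --   + ⟨∇η(u⁺(u)) − ∇η(u_R) − a(∇η(u) − ∇η(u_L)), D²f(u)[v,w] − (Dσ(u)v)w⟩`
      ∀ v w, fderiv ℝ (fderiv ℝ (Dmax η q f uplus σ u_L u_R a)) u v w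
        = (fderiv ℝ (fderiv ℝ η) (uplus u) (fderiv ℝ uplus u v)
              (fderiv ℝ f u w - σ u • w)
            - a * fderiv ℝ (fderiv ℝ η) u v (fderiv ℝ f u w - σ u • w))
          + (fderiv ℝ η (uplus u)
                (fderiv ℝ (fderiv ℝ f) u v w - fderiv ℝ σ u v • w)
              - fderiv ℝ η u_R
                (fderiv ℝ (fderiv ℝ f) u v w - fderiv ℝ σ u v • w)
              - a * (fderiv ℝ η u
                      (fderiv ℝ (fderiv ℝ f) u v w - fderiv ℝ σ u v • w)
                    - fderiv ℝ η u_L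
                      (fderiv ℝ (fderiv ℝ f) u v w - fderiv ℝ σ u v • w))) :=
  stmt12_general V Ω hV hΩ hΩV f η q hf hη hq hcompat u_L u_R a uplus σ hmaps hup hσ hRH heq
end
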